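/- arXiv:0805.4711 — 3 statements merged into one kernel-verified Lean document; each statement's English description precedes it below -/
import Mathlib

section
/- Let 0 < t < 2 and let 𝒫 = {P_1, …, P_N} be a finite collection of pairwise disjoint dyadic squares in the plane satisfying the t-Carleson packing condition with norm at most 1, i.e., for every dyadic square Q, Σ_{P ∈ 𝒫, P ⊆ Q} ℓ(P)^t ≤ ℓ(Q)^t. Define the weight w(x) = Σ_j ℓ(P_j)^{t−2} · χ_{P_j}(x). Then for every axis-parallel square Q (not necessarily dyadic), ∫_Q w dx ≤ 16 · ℓ(Q)^t. -/
/-!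
Split the squares `P_j` according to whether `ℓ(P_j) ≥ s` or `ℓ(P_j) < s`. The large ones are
disjoint and have density `ℓ(P_j)^{t-2} ≤ s^{t-2}` (as `t < 2`), so together they contribute
at most `s^{t-2} |Q| = s^t`. A small one contributes at most `|P_j| ℓ(P_j)^{t-2} = ℓ(P_j)^t` and
lies in its dyadic ancestor of side `L`, where `s/2 < L ≤ s`. When `P_j` meets `Q` in positive
measure, so does the ancestor, which leaves at most `3 × 3` possible ancestors; by the packing
condition each of them carries `∑ ℓ(P_j)^t ≤ L^t ≤ s^t`. Altogether `∫_Q w ≤ 10 s^t`.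
-/

open MeasureTheory Set
open scoped Classical

/-- The closed dyadic square `[2^{-k}m₁, 2^{-k}(m₁+1)] × [2^{-k}m₂, 2^{-k}(m₂+1)]`. -/
def dyadicSquare (k : ℤ) (m : ℤ × ℤ) : Set (ℝ × ℝ) :=
  Icc ((2 : ℝ) ^ (-k) * m.1) ((2 : ℝ) ^ (-k) * (m.1 + 1)) ×ˢ
    Icc ((2 : ℝ) ^ (-k) * m.2) ((2 : ℝ) ^ (-k) * (m.2 + 1))

lemma measurableSet_dyadicSquare (k : ℤ) (m : ℤ × ℤ) : MeasurableSet (dyadicSquare k m) :=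
  measurableSet_Icc.prod measurableSet_Icc

lemma volume_real_square {s : ℝ} (hs : 0 ≤ s) (a b : ℝ) :
    volume.real (Icc a (a + s) ×ˢ Icc b (b + s)) = s ^ 2 := by
  rw [Measure.volume_eq_prod, measureReal_prod_prod, Real.volume_real_Icc_of_le (by linarith),
    Real.volume_real_Icc_of_le (by linarith)]
  ring

lemma volume_real_dyadicSquare (k : ℤ) (m : ℤ × ℤ) :
    volume.real (dyadicSquare k m) = ((2 : ℝ) ^ (-k)) ^ 2 := by
  simp only [dyadicSquare, mul_add_one]
  exact volume_real_square (zpow_pos two_pos _).le _ _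

lemma Icc_mul_subset_Icc_mul_ediv {c : ℝ} (hc : 0 ≤ c) {D : ℤ} (hD : 0 < D) (n : ℤ) :
    Icc (c * n) (c * (n + 1)) ⊆ Icc (c * D * ((n / D : ℤ) : ℝ)) (c * D * ((n / D : ℤ) + 1)) := by
  have h₁ : (D * (n / D : ℤ) : ℝ) ≤ n := by exact_mod_cast Int.mul_ediv_self_le hD.ne'
  have h₂ : (n + 1 : ℝ) ≤ D * ((n / D : ℤ) + 1) := by
    exact_mod_cast (Int.lt_mul_ediv_self_add (x := n) hD).trans_eq (mul_add_one _ _).symm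
  apply Icc_subset_Icc <;> rw [mul_assoc] <;> gcongr

def dyadicAncestor (n : ℕ) (m : ℤ × ℤ) : ℤ × ℤ := (m.1 / 2 ^ n, m.2 / 2 ^ n)

lemma dyadicSquare_subset_dyadicAncestor {k k' : ℤ} (h : k ≤ k') (m : ℤ × ℤ) :
    dyadicSquare k' m ⊆ dyadicSquare k (dyadicAncestor (k' - k).toNat m) := by
  have hscale : (2 : ℝ) ^ (-k') * ((2 ^ (k' - k).toNat : ℤ) : ℝ) = 2 ^ (-k) := by
    rw [Int.cast_pow, Int.cast_ofNat, ← zpow_natCast, Int.toNat_of_nonneg (sub_nonneg.2 h),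
      ← zpow_add₀ two_ne_zero]
    ring_nf
  have hc : (0 : ℝ) ≤ 2 ^ (-k') := (zpow_pos two_pos _).le
  have hD : (0 : ℤ) < 2 ^ (k' - k).toNat := by positivity
  unfold dyadicSquare dyadicAncestor
  rw [← hscale]
  exact prod_mono (Icc_mul_subset_Icc_mul_ediv hc hD _) (Icc_mul_subset_Icc_mul_ediv hc hD _)

lemma exists_zpow_two_le_lt_two_mul {s : ℝ} (hs : 0 < s) :
    ∃ k : ℤ, (2 : ℝ) ^ (-k) ≤ s ∧ s < 2 * 2 ^ (-k) :=
  ⟨-Int.log 2 s, by simpa using Int.zpow_log_le_self one_lt_two hs,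
    by simpa [zpow_add_one₀, mul_comm] using Int.lt_zpow_succ_log_self one_lt_two s⟩

lemma le_of_zpow_two_lt_of_lt_two_mul {k k₀ : ℤ} {s : ℝ} (h₁ : (2 : ℝ) ^ (-k) < s)
    (h₂ : s < 2 * 2 ^ (-k₀)) : k₀ ≤ k := by
  have : (2 : ℝ) ^ (-k) < 2 ^ (-k₀ + 1) := by rw [zpow_add_one₀ two_ne_zero]; linarith
  have := (zpow_lt_zpow_iff_right₀ one_lt_two).1 this
  omega

lemma mem_Icc_floor_of_volume_Icc_inter_ne_zero {a s L : ℝ} (hL : 0 < L) (hsL : s < 2 * L)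
    {n : ℤ} (h : volume (Icc (L * n) (L * (n + 1)) ∩ Icc a (a + s)) ≠ 0) :
    n ∈ Finset.Icc ⌊a / L⌋ (⌊a / L⌋ + 2) := by
  rw [Icc_inter_Icc, Real.volume_Icc, Ne, ENNReal.ofReal_eq_zero, not_le, sub_pos, lt_inf_iff,
    sup_lt_iff, sup_lt_iff] at h
  obtain ⟨⟨-, hn_lt⟩, ⟨lt_n, -⟩⟩ := h
  have h₁ : a / L < ((n + 1 : ℤ) : ℝ) := by push_cast; exact (div_lt_iff₀ hL).2 (by linarith)
  have h₂ : ((n - 2 : ℤ) : ℝ) ≤ a / L := by push_cast; exact (le_div_iff₀ hL).2 (by linarith)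
  have := Int.floor_lt.2 h₁
  have := Int.le_floor.2 h₂
  rw [Finset.mem_Icc]
  omega

lemma mem_Icc_floor_product_of_volume_dyadicSquare_inter_ne_zero {a b s : ℝ} {k : ℤ}
    (hs : s < 2 * 2 ^ (-k)) {p : ℤ × ℤ}
    (h : volume (dyadicSquare k p ∩ Icc a (a + s) ×ˢ Icc b (b + s)) ≠ 0) :
    p ∈ Finset.Icc ⌊a / 2 ^ (-k)⌋ (⌊a / 2 ^ (-k)⌋ + 2) ×ˢ
      Finset.Icc ⌊b / 2 ^ (-k)⌋ (⌊b / 2 ^ (-k)⌋ + 2) := by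
  rw [dyadicSquare, prod_inter_prod, Measure.volume_eq_prod, Measure.prod_prod,
    mul_ne_zero_iff] at h
  have hL : (0 : ℝ) < 2 ^ (-k) := zpow_pos two_pos _
  exact Finset.mem_product.2 ⟨mem_Icc_floor_of_volume_Icc_inter_ne_zero hL hs h.1,
    mem_Icc_floor_of_volume_Icc_inter_ne_zero hL hs h.2⟩

lemma integral_sum_indicator_const {α ι : Type*} [MeasurableSpace α] (μ : Measure α)
    [IsFiniteMeasure μ] (I : Finset ι) {P : ι → Set α} (hP : ∀ i, MeasurableSet (P i))
    (c : ι → ℝ) :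
    ∫ x, ∑ i ∈ I, (P i).indicator (fun _ => c i) x ∂μ = ∑ i ∈ I, μ.real (P i) * c i := by
  rw [integral_finsetSum I fun i _ => (integrable_const (c i)).indicator (hP i)]
  simp_rw [integral_indicator_const _ (hP _), smul_eq_mul]

lemma sq_mul_rpow_sub_two {ℓ : ℝ} (hℓ : 0 < ℓ) (t : ℝ) : ℓ ^ 2 * ℓ ^ (t - 2) = ℓ ^ t := by
  rw [← Real.rpow_natCast, ← Real.rpow_add hℓ]
  norm_num

lemma sum_measureReal_mul_rpow_sub_two_le {α ι : Type*} [MeasurableSpace α] (μ : Measure α)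
    [IsFiniteMeasure μ] (I : Finset ι) {P : ι → Set α} (hP : ∀ i, MeasurableSet (P i))
    (hdisj : Pairwise (Function.onFun Disjoint P)) {ℓ : ι → ℝ} {s t : ℝ} (hs : 0 < s)
    (ht : t ≤ 2) (hℓ : ∀ i ∈ I, s ≤ ℓ i) :
    ∑ i ∈ I, μ.real (P i) * ℓ i ^ (t - 2) ≤ μ.real univ * s ^ (t - 2) :=
  calc ∑ i ∈ I, μ.real (P i) * ℓ i ^ (t - 2)
      ≤ ∑ i ∈ I, μ.real (P i) * s ^ (t - 2) := Finset.sum_le_sum fun i hi =>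
        mul_le_mul_of_nonneg_left (Real.rpow_le_rpow_of_nonpos hs (hℓ i hi) (by linarith))
          measureReal_nonneg
    _ = (∑ i ∈ I, μ.real (P i)) * s ^ (t - 2) := (Finset.sum_mul _ _ _).symm
    _ ≤ μ.real univ * s ^ (t - 2) := by
      gcongr
      exact sum_measureReal_le_measureReal_univ (fun i _ => hP i) (hdisj.set_pairwise _)

lemma measureReal_restrict_dyadicSquare_mul_rpow_le (Q : Set (ℝ × ℝ)) (k : ℤ) (m : ℤ × ℤ)
    (t : ℝ) :
    (volume.restrict Q).real (dyadicSquare k m) * ((2 : ℝ) ^ (-k)) ^ (t - 2) ≤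
      ((2 : ℝ) ^ (-k)) ^ t := by
  have hℓ : (0 : ℝ) < 2 ^ (-k) := zpow_pos two_pos _
  refine (mul_le_mul_of_nonneg_right ?_ (Real.rpow_nonneg hℓ.le _)).trans_eq
    (sq_mul_rpow_sub_two hℓ t)
  rw [← volume_real_dyadicSquare, measureReal_restrict_apply (measurableSet_dyadicSquare _ _)]
  exact measureReal_mono inter_subset_left (isCompact_Icc.prod isCompact_Icc).measure_ne_top

/-- The `t`-Carleson packing condition with norm at most `1`. -/
def CarlesonPacking {ι : Type*} [Fintype ι] (t : ℝ) (k : ι → ℤ) (m : ι → ℤ × ℤ) : Prop :=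
  ∀ (k' : ℤ) (m' : ℤ × ℤ),
    (∑ j, if dyadicSquare (k j) (m j) ⊆ dyadicSquare k' m'
      then ((2 : ℝ) ^ (-(k j)) : ℝ) ^ t else 0) ≤ ((2 : ℝ) ^ (-k') : ℝ) ^ t

namespace CarlesonPacking

variable {ι : Type*} [Fintype ι] {t : ℝ} {k : ι → ℤ} {m : ι → ℤ × ℤ}

lemma sum_le (hpack : CarlesonPacking t k m) {F : Finset ι} {k' : ℤ} {m' : ℤ × ℤ}
    (hF : ∀ j ∈ F, dyadicSquare (k j) (m j) ⊆ dyadicSquare k' m') :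
    ∑ j ∈ F, ((2 : ℝ) ^ (-k j)) ^ t ≤ ((2 : ℝ) ^ (-k')) ^ t := by
  refine le_trans ?_ (hpack k' m')
  rw [← Finset.sum_filter]
  exact Finset.sum_le_sum_of_subset_of_nonneg
    (fun j hj => Finset.mem_filter.2 ⟨Finset.mem_univ _, hF j hj⟩) (fun j _ _ => by positivity)

lemma sum_measureReal_mul_rpow_sub_two_le_nine_mul (hpack : CarlesonPacking t k m) (ht : 0 ≤ t)
    {a b s : ℝ} (hs : 0 < s) :
    ∑ j with (2 : ℝ) ^ (-k j) < s,
        (volume.restrict (Icc a (a + s) ×ˢ Icc b (b + s))).real (dyadicSquare (k j) (m j)) *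
          ((2 : ℝ) ^ (-k j)) ^ (t - 2) ≤ 9 * s ^ t := by
  set μ := volume.restrict (Icc a (a + s) ×ˢ Icc b (b + s))
  obtain ⟨k₀, hk₀s, hsk₀⟩ := exists_zpow_two_le_lt_two_mul hs
  set L : ℝ := 2 ^ (-k₀)
  set grid := Finset.Icc ⌊a / L⌋ (⌊a / L⌋ + 2) ×ˢ Finset.Icc ⌊b / L⌋ (⌊b / L⌋ + 2)
  set anc : ι → ℤ × ℤ := fun j => dyadicAncestor (k j - k₀).toNat (m j)
  have hsub : ∀ j, (2 : ℝ) ^ (-k j) < s → dyadicSquare (k j) (m j) ⊆ dyadicSquare k₀ (anc j) :=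
    fun j hj => dyadicSquare_subset_dyadicAncestor (le_of_zpow_two_lt_of_lt_two_mul hj hsk₀) _
  set S := (Finset.univ : Finset ι).filter
    fun j => (2 : ℝ) ^ (-k j) < s ∧ μ (dyadicSquare (k j) (m j)) ≠ 0 with hS
  have hmaps : ∀ j ∈ S, anc j ∈ grid := by
    intro j hj
    obtain ⟨hj_small, hj_meets⟩ := (Finset.mem_filter.1 hj).2
    refine mem_Icc_floor_product_of_volume_dyadicSquare_inter_ne_zero hsk₀ ?_
    rw [← Measure.restrict_apply (measurableSet_dyadicSquare _ _)]
    exact (measure_mono_null (hsub j hj_small)).mt hj_meets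
  calc _ = ∑ j ∈ S, μ.real (dyadicSquare (k j) (m j)) * ((2 : ℝ) ^ (-k j)) ^ (t - 2) := by
        rw [hS, ← Finset.filter_filter]
        refine (Finset.sum_filter_of_ne fun j _ hj => ?_).symm
        exact fun h => hj (by simp [measureReal_def, h])
    _ ≤ ∑ j ∈ S, ((2 : ℝ) ^ (-k j)) ^ t :=
        Finset.sum_le_sum fun j _ => measureReal_restrict_dyadicSquare_mul_rpow_le _ _ _ t
    _ = ∑ p ∈ grid, ∑ j ∈ S with anc j = p, ((2 : ℝ) ^ (-k j)) ^ t :=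
        (Finset.sum_fiberwise_of_maps_to hmaps _).symm
    _ ≤ ∑ p ∈ grid, L ^ t := by
        refine Finset.sum_le_sum fun p _ => hpack.sum_le (m' := p) fun j hj => ?_
        obtain ⟨hjS, rfl⟩ := Finset.mem_filter.1 hj
        exact hsub j (Finset.mem_filter.1 hjS).2.1
    _ = 9 * L ^ t := by
        have hcard : ∀ x : ℤ, (x + 2 + 1 - x).toNat = 3 := fun x => by omega
        simp [grid, hcard]
    _ ≤ 9 * s ^ t := by gcongr

end CarlesonPacking

/-- **The measure `w dx` is `t`-dimensional on all squares.**
If `𝒫 = {P_j}` are pairwise disjoint dyadic squares with `t`-Carleson packing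
norm at most `1`, and `w = Σ_j ℓ(P_j)^{t-2} χ_{P_j}`, then for every
axis-parallel square `Q` (of side `s`), `∫_Q w ≤ 16 s^t`. -/
theorem weight_t_dimensional (t : ℝ) (ht0 : 0 < t) (ht2 : t < 2)
    (N : ℕ) (k : Fin N → ℤ) (m : Fin N → ℤ × ℤ)
    (hdisj : ∀ i j, i ≠ j → Disjoint (dyadicSquare (k i) (m i)) (dyadicSquare (k j) (m j)))
    (hpack : ∀ (k' : ℤ) (m' : ℤ × ℤ),
      (∑ j, if dyadicSquare (k j) (m j) ⊆ dyadicSquare k' m'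
        then ((2 : ℝ) ^ (-(k j)) : ℝ) ^ t else 0) ≤ ((2 : ℝ) ^ (-k') : ℝ) ^ t)
    (a b s : ℝ) (hs : 0 < s) :
    ∫ x in (Icc a (a + s) ×ˢ Icc b (b + s)),
        (∑ j, Set.indicator (dyadicSquare (k j) (m j))
          (fun _ => ((2 : ℝ) ^ (-(k j)) : ℝ) ^ (t - 2)) x)
      ≤ 16 * s ^ t := by
  set Q := Icc a (a + s) ×ˢ Icc b (b + s)
  have : IsFiniteMeasure (volume.restrict Q) :=
    isFiniteMeasure_restrict.2 (isCompact_Icc.prod isCompact_Icc).measure_ne_top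
  rw [integral_sum_indicator_const _ _ (fun j => measurableSet_dyadicSquare _ _),
    ← Finset.sum_filter_add_sum_filter_not _ fun j => (2 : ℝ) ^ (-k j) < s]
  have hsmall := CarlesonPacking.sum_measureReal_mul_rpow_sub_two_le_nine_mul hpack ht0.le
    (a := a) (b := b) hs
  have hlarge : ∑ j with ¬(2 : ℝ) ^ (-k j) < s,
      (volume.restrict Q).real (dyadicSquare (k j) (m j)) * ((2 : ℝ) ^ (-k j)) ^ (t - 2) ≤
        s ^ t := by
    refine (sum_measureReal_mul_rpow_sub_two_le _ _ (fun j => measurableSet_dyadicSquare _ _)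
      (fun i j => hdisj i j) hs ht2.le fun j hj => not_lt.1 (Finset.mem_filter.1 hj).2).trans_eq ?_
    rw [measureReal_restrict_apply_univ, volume_real_square hs.le, sq_mul_rpow_sub_two hs]
  linarith [Real.rpow_pos_of_pos hs t]
end

section
/- Let E ⊂ (0,1)² ⊂ ℝ² be compact, 0 < t < 2, and ε > 0. Then there exists a finite collection 𝒯 = {T_1, …, T_M} of closed dyadic squares with pairwise disjoint interiors, each intersecting E, such that: (i) E ⊆ ⋃_i T_i; (ii) for every dyadic square Q, Σ_{T_i ⊆ Q} ℓ(T_i)^t ≤ ℓ(Q)^t; (iii) Σ_i ℓ(T_i)^t ≤ 9·(ℋ^t_∞(E) + ε). -/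
open MeasureTheory Set ENNReal
open scoped Classical

/-- The `t`-dimensional Hausdorff content of `E ⊆ ℝ²`. -/
noncomputable def hausdorffContent (t : ℝ) (E : Set (ℝ × ℝ)) : ℝ≥0∞ :=
  ⨅ (B : ℕ → Set (ℝ × ℝ)) (_ : E ⊆ ⋃ i, B i), ∑' i, EMetric.diam (B i) ^ t

/-!
Take a countable cover `B i` of `E` with `∑ diam (B i) ^ t < ℋ^t_∞(E) + ε / 2`. Each `B i` lies in
the interior of a `3 × 3` block of dyadic squares of a side `ℓ` with `diam (B i) < 2ℓ` and
`ℓ ^ t ≤ diam (B i) ^ t + δ i`, where `∑ δ i < ε / 2`; by compactness finitely many blocks cover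
`E`, giving a finite family `𝒮` of mass at most `9 (ℋ^t_∞(E) + ε)`.

A stopping time then enforces the packing condition. Call `Q` heavy if
`ℓ(Q) ^ t ≤ ∑_{S ∈ 𝒮, S ⊆ Q} ℓ(S) ^ t`; heavy squares have bounded size, so every `S ∈ 𝒮` lies in
a maximal heavy square, and the maximal heavy squares have disjoint interiors. Each of them carries
at most the mass of the squares of `𝒮` inside it, so the total mass does not grow. For a dyadic
`Q`, if `Q` is heavy it contains no maximal heavy square but itself; otherwise the maximal heavy
squares inside `Q` carry at most the mass of `𝒮` inside `Q`, which is `< ℓ(Q) ^ t`.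
-/

open scoped NNReal
open Bornology

lemma Finset.sum_biUnion_le {ι α M : Type*} [AddCommMonoid M] [PartialOrder M]
    [CanonicallyOrderedAdd M] [DecidableEq α] (I : Finset ι) (F : ι → Finset α) (f : α → M) :
    ∑ x ∈ I.biUnion F, f x ≤ ∑ i ∈ I, ∑ x ∈ F i, f x := by
  induction I using Finset.induction_on with
  | empty => simp
  | insert i I hi ih =>
    rw [Finset.biUnion_insert, Finset.sum_insert hi]
    exact (le_self_add.trans_eq Finset.sum_union_inter).trans (by gcongr)

lemma hausdorffContent_ne_top {t : ℝ} (ht : 0 < t) {E : Set (ℝ × ℝ)}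
    (hE : IsBounded E) : hausdorffContent t E ≠ ⊤ := by
  let B : ℕ → Set (ℝ × ℝ) := fun i => if i = 0 then E else ∅
  have hcov : E ⊆ ⋃ i, B i := subset_iUnion_of_subset 0 (by simp [B])
  have hsum : ∑' i, Metric.ediam (B i) ^ t = Metric.ediam E ^ t :=
    (tsum_eq_single 0 fun i hi => by simp [B, hi, ENNReal.zero_rpow_of_pos ht]).trans (by simp [B])
  exact ne_top_of_le_ne_top (ENNReal.rpow_ne_top_of_nonneg ht.le hE.ediam_ne_top)
    ((iInf₂_le B hcov).trans_eq hsum)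

lemma exists_cover_tsum_lt_hausdorffContent_add {t : ℝ} {E : Set (ℝ × ℝ)}
    (hE : hausdorffContent t E ≠ ⊤) {η : ℝ≥0∞} (hη : η ≠ 0) :
    ∃ B : ℕ → Set (ℝ × ℝ), E ⊆ ⋃ i, B i ∧
      ∑' i, Metric.ediam (B i) ^ t < hausdorffContent t E + η := by
  obtain ⟨B, hB⟩ := iInf_lt_iff.1 (ENNReal.lt_add_right hE hη)
  obtain ⟨hcov, hB⟩ := iInf_lt_iff.1 hB
  exact ⟨B, hcov, hB⟩

namespace DyadicGrid

abbrev Index : Type := ℤ × ℤ × ℤ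

noncomputable def side (k : ℤ) : ℝ := 2 ^ (-k)

def interval (k n : ℤ) : Set ℝ := Icc (side k * n) (side k * (n + 1))

def square (P : Index) : Set (ℝ × ℝ) := dyadicSquare P.1 P.2

lemma side_pos (k : ℤ) : 0 < side k := zpow_pos two_pos _

lemma side_le_side_iff {k k' : ℤ} : side k' ≤ side k ↔ k ≤ k' := by
  rw [side, side, zpow_le_zpow_iff_right₀ (by norm_num), neg_le_neg_iff]

lemma side_eq_mul_two_pow {j k : ℤ} (h : j ≤ k) :
    side j = side k * ((2 ^ (k - j).toNat : ℤ) : ℝ) := by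
  rw [side, side, Int.cast_pow, Int.cast_ofNat, ← zpow_natCast, Int.toNat_of_nonneg (by omega),
    ← zpow_add₀ two_ne_zero]
  ring_nf

lemma side_rpow (k : ℤ) (t : ℝ) : side k ^ t = ((2 : ℝ) ^ t) ^ (-k) := by
  rw [side, ← Real.rpow_intCast, ← Real.rpow_intCast, ← Real.rpow_mul two_pos.le,
    ← Real.rpow_mul two_pos.le, mul_comm t]

lemma square_eq_prod (P : Index) : square P = interval P.1 P.2.1 ×ˢ interval P.1 P.2.2 := rfl

lemma interior_interval (k n : ℤ) :
    interior (interval k n) = Ioo (side k * n) (side k * (n + 1)) :=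
  interior_Icc

lemma interior_square (P : Index) :
    interior (square P) = interior (interval P.1 P.2.1) ×ˢ interior (interval P.1 P.2.2) := by
  rw [square_eq_prod, interior_prod_eq]

lemma side_mul_lt (k n : ℤ) : side k * n < side k * (n + 1) :=
  mul_lt_mul_of_pos_left (lt_add_one _) (side_pos k)

lemma interior_interval_nonempty (k n : ℤ) : (interior (interval k n)).Nonempty := by
  rw [interior_interval, nonempty_Ioo]
  exact side_mul_lt k n

lemma interior_square_nonempty (P : Index) : (interior (square P)).Nonempty := by
  rw [interior_square]
  exact (interior_interval_nonempty _ _).prod (interior_interval_nonempty _ _)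

lemma not_disjoint_interior_of_subset {P Q R : Index} (hQ : square P ⊆ square Q)
    (hR : square P ⊆ square R) : ¬Disjoint (interior (square Q)) (interior (square R)) := by
  obtain ⟨x, hx⟩ := interior_square_nonempty P
  exact Set.not_disjoint_iff.2 ⟨x, interior_mono hQ hx, interior_mono hR hx⟩

lemma disjoint_interior_interval {k n n' : ℤ} (h : n < n') :
    Disjoint (interior (interval k n)) (interior (interval k n')) := by
  rw [interior_interval, interior_interval]
  have hn : side k * (n + 1) ≤ side k * n' :=
    mul_le_mul_of_nonneg_left (by exact_mod_cast h) (side_pos k).le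
  exact Set.disjoint_left.2 fun x hx hx' => (hx.2.trans_le hn).not_gt hx'.1

lemma disjoint_interior_square {k : ℤ} {m m' : ℤ × ℤ} (h : m ≠ m') :
    Disjoint (interior (square (k, m))) (interior (square (k, m'))) := by
  rw [interior_square, interior_square, Set.disjoint_prod]
  obtain h | h : m.1 ≠ m'.1 ∨ m.2 ≠ m'.2 := by
    contrapose! h
    exact Prod.ext h.1 h.2
  · rcases h.lt_or_gt with h | h
    exacts [Or.inl (disjoint_interior_interval h), Or.inl (disjoint_interior_interval h).symm]
  · rcases h.lt_or_gt with h | h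
    exacts [Or.inr (disjoint_interior_interval h), Or.inr (disjoint_interior_interval h).symm]

lemma fst_le_of_square_subset {P Q : Index} (h : square P ⊆ square Q) : Q.1 ≤ P.1 := by
  have hne : ∀ k n, interval k n ≠ ∅ := fun k n =>
    ((interior_interval_nonempty k n).mono interior_subset).ne_empty
  rw [square_eq_prod, square_eq_prod, prod_subset_prod_iff] at h
  obtain ⟨h, -⟩ := h.resolve_right (by simp [hne])
  obtain ⟨hl, hr⟩ := (Icc_subset_Icc_iff (side_mul_lt P.1 P.2.1).le).1 h
  rw [← side_le_side_iff]
  nlinarith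

-- For `j ≤ P.1` this is the dyadic square of scale `j` containing `square P`.
def ancestor (P : Index) (j : ℤ) : Index :=
  (j, P.2.1 / 2 ^ (P.1 - j).toNat, P.2.2 / 2 ^ (P.1 - j).toNat)

lemma ancestor_self (P : Index) : ancestor P P.1 = P := by
  simp [ancestor]

lemma interval_subset_ancestor {j k : ℤ} (h : j ≤ k) (n : ℤ) :
    interval k n ⊆ interval j (n / 2 ^ (k - j).toNat) := by
  set N : ℤ := 2 ^ (k - j).toNat
  have hN : 0 < N := by positivity
  have hlow : ((n / N : ℤ) : ℝ) * N ≤ n := by exact_mod_cast Int.ediv_mul_le n hN.ne'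
  have hup : (n : ℝ) + 1 ≤ ((n / N : ℤ) + 1) * N := by
    exact_mod_cast Int.lt_ediv_add_one_mul_self n hN
  have hk := side_pos k
  rw [interval, interval, side_eq_mul_two_pow h]
  apply Icc_subset_Icc <;> nlinarith

lemma square_subset_ancestor (P : Index) {j : ℤ} (h : j ≤ P.1) :
    square P ⊆ square (ancestor P j) :=
  prod_mono (interval_subset_ancestor h _) (interval_subset_ancestor h _)

lemma square_subset_or_disjoint_interior {P Q : Index} (h : Q.1 ≤ P.1) :
    square P ⊆ square Q ∨ Disjoint (interior (square P)) (interior (square Q)) := by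
  by_cases hQ : ancestor P Q.1 = Q
  · exact Or.inl (hQ ▸ square_subset_ancestor P h)
  · exact Or.inr ((disjoint_interior_square fun hm => hQ (Prod.ext rfl hm)).mono_left
      (interior_mono (square_subset_ancestor P h)))

lemma eq_ancestor_of_square_subset {P Q : Index} (h : square P ⊆ square Q) :
    Q = ancestor P Q.1 := by
  by_contra hne
  exact not_disjoint_interior_of_subset h (square_subset_ancestor P (fst_le_of_square_subset h))
    (disjoint_interior_square fun hm => hne (Prod.ext rfl hm))

section Stopping

variable (w : Index → ℝ) (𝒮 : Finset Index)

def Heavy (Q : Index) : Prop := w Q ≤ ∑ S ∈ 𝒮 with square S ⊆ square Q, w S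

def IsMaxHeavy (T : Index) : Prop :=
  Heavy w 𝒮 T ∧ ∀ Q, Heavy w 𝒮 Q → square T ⊆ square Q → Q = T

variable {w 𝒮}

lemma heavy_of_mem (hw : ∀ P, 0 ≤ w P) {S : Index} (hS : S ∈ 𝒮) : Heavy w 𝒮 S :=
  Finset.single_le_sum (fun P _ => hw P) (Finset.mem_filter.2 ⟨hS, subset_rfl⟩)

lemma exists_isMaxHeavy_superset (hw : ∀ P, 0 ≤ w P) {N₀ : ℤ}
    (hN₀ : ∀ Q, Heavy w 𝒮 Q → N₀ ≤ Q.1) {S : Index} (hS : S ∈ 𝒮) :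
    ∃ T, IsMaxHeavy w 𝒮 T ∧ square S ⊆ square T := by
  set J : Set ℤ := {j | j ≤ S.1 ∧ Heavy w 𝒮 (ancestor S j)}
  have hJ : BddBelow J := ⟨N₀, fun j hj => hN₀ _ hj.2⟩
  have hmem : sInf J ∈ J :=
    Int.csInf_mem ⟨S.1, le_rfl, by rw [ancestor_self]; exact heavy_of_mem hw hS⟩ hJ
  have hS_sub := square_subset_ancestor S hmem.1
  refine ⟨ancestor S (sInf J), ⟨hmem.2, fun Q hQ hsub => ?_⟩, hS_sub⟩
  have hQ_anc := eq_ancestor_of_square_subset (hS_sub.trans hsub)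
  have hQ_le : Q.1 ≤ sInf J := fst_le_of_square_subset hsub
  have hQ_ge : sInf J ≤ Q.1 :=
    csInf_le hJ ⟨fst_le_of_square_subset (hS_sub.trans hsub), hQ_anc ▸ hQ⟩
  rw [hQ_anc, le_antisymm hQ_le hQ_ge]

lemma IsMaxHeavy.disjoint_interior {T T' : Index} (hT : IsMaxHeavy w 𝒮 T)
    (hT' : IsMaxHeavy w 𝒮 T') (hne : T ≠ T') :
    Disjoint (interior (square T)) (interior (square T')) := by
  rcases le_total T'.1 T.1 with h | h
  · exact (square_subset_or_disjoint_interior h).resolve_left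
      fun hsub => hne (hT.2 T' hT'.1 hsub).symm
  · exact ((square_subset_or_disjoint_interior h).resolve_left
      fun hsub => hne (hT'.2 T hT.1 hsub)).symm

-- Each square of `𝒮` lies in at most one of the squares of `𝒜`, whose interiors are disjoint.
lemma sum_le_sum_of_isMaxHeavy (hw : ∀ P, 0 ≤ w P) {𝒜 : Finset Index}
    (h𝒜 : ∀ T ∈ 𝒜, IsMaxHeavy w 𝒮 T) :
    ∑ T ∈ 𝒜, w T ≤ ∑ S ∈ 𝒮 with ∃ T ∈ 𝒜, square S ⊆ square T, w S := by
  have hdisj : (𝒜 : Set Index).PairwiseDisjoint fun T => {S ∈ 𝒮 | square S ⊆ square T} :=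
    fun T hT T' hT' hne => Finset.disjoint_left.2 fun S hS hS' =>
      not_disjoint_interior_of_subset (Finset.mem_filter.1 hS).2 (Finset.mem_filter.1 hS').2
        ((h𝒜 T hT).disjoint_interior (h𝒜 T' hT') hne)
  calc ∑ T ∈ 𝒜, w T ≤ ∑ T ∈ 𝒜, ∑ S ∈ 𝒮 with square S ⊆ square T, w S :=
        Finset.sum_le_sum fun T hT => (h𝒜 T hT).1
    _ = ∑ S ∈ 𝒜.biUnion fun T => {S ∈ 𝒮 | square S ⊆ square T}, w S :=
        (Finset.sum_biUnion hdisj).symm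
    _ ≤ _ := Finset.sum_le_sum_of_subset_of_nonneg (fun S hS => by
        obtain ⟨T, hT, hST⟩ := Finset.mem_biUnion.1 hS
        exact Finset.mem_filter.2 ⟨(Finset.mem_filter.1 hST).1, T, hT, (Finset.mem_filter.1 hST).2⟩)
        fun P _ _ => hw P

lemma sum_filter_subset_le_of_isMaxHeavy (hw : ∀ P, 0 ≤ w P) {𝒯 : Finset Index}
    (h𝒯 : ∀ T ∈ 𝒯, IsMaxHeavy w 𝒮 T) (Q : Index) :
    ∑ T ∈ 𝒯 with square T ⊆ square Q, w T ≤ w Q := by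
  by_cases hQ : Heavy w 𝒮 Q
  · calc ∑ T ∈ 𝒯 with square T ⊆ square Q, w T ≤ ∑ T ∈ {Q}, w T :=
          Finset.sum_le_sum_of_subset_of_nonneg (fun T hT => Finset.mem_singleton.2
            ((h𝒯 T (Finset.mem_filter.1 hT).1).2 Q hQ (Finset.mem_filter.1 hT).2).symm)
            fun P _ _ => hw P
      _ = w Q := Finset.sum_singleton _ _
  · calc ∑ T ∈ 𝒯 with square T ⊆ square Q, w T
        ≤ ∑ S ∈ 𝒮 with ∃ T ∈ 𝒯.filter (square · ⊆ square Q), square S ⊆ square T, w S :=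
          sum_le_sum_of_isMaxHeavy hw fun T hT => h𝒯 T (Finset.mem_filter.1 hT).1
      _ ≤ ∑ S ∈ 𝒮 with square S ⊆ square Q, w S := by
          refine Finset.sum_le_sum_of_subset_of_nonneg (Finset.monotone_filter_right _ ?_)
            fun P _ _ => hw P
          rintro S - ⟨T, hT, hST⟩
          exact hST.trans (Finset.mem_filter.1 hT).2
      _ ≤ w Q := (not_le.1 hQ).le

theorem exists_isMaxHeavy_cover (hw : ∀ P, 0 ≤ w P) {N₀ : ℤ}
    (hN₀ : ∀ Q, Heavy w 𝒮 Q → N₀ ≤ Q.1) :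
    ∃ 𝒯 : Finset Index,
      (∀ T ∈ 𝒯, ∃ S ∈ 𝒮, square S ⊆ square T) ∧
      (∀ S ∈ 𝒮, ∃ T ∈ 𝒯, square S ⊆ square T) ∧
      (𝒯 : Set Index).PairwiseDisjoint (fun T => interior (square T)) ∧
      (∀ Q, ∑ T ∈ 𝒯 with square T ⊆ square Q, w T ≤ w Q) ∧
      ∑ T ∈ 𝒯, w T ≤ ∑ S ∈ 𝒮, w S := by
  choose! T hT_max hT_sub using fun S (hS : S ∈ 𝒮) => exists_isMaxHeavy_superset hw hN₀ hS
  have hmax : ∀ T' ∈ 𝒮.image T, IsMaxHeavy w 𝒮 T' := Finset.forall_mem_image.2 hT_max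
  refine ⟨𝒮.image T, Finset.forall_mem_image.2 fun S hS => ⟨S, hS, hT_sub S hS⟩,
    fun S hS => ⟨T S, Finset.mem_image_of_mem T hS, hT_sub S hS⟩,
    fun T₁ h₁ T₂ h₂ hne => (hmax T₁ h₁).disjoint_interior (hmax T₂ h₂) hne,
    sum_filter_subset_le_of_isMaxHeavy hw hmax, ?_⟩
  exact (sum_le_sum_of_isMaxHeavy hw hmax).trans
    (Finset.sum_le_sum_of_subset_of_nonneg (Finset.filter_subset _ _) fun P _ _ => hw P)

end Stopping

lemma exists_forall_le_of_side_rpow_le {t : ℝ} (ht : 0 < t) (W : ℝ) :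
    ∃ N₀ : ℤ, ∀ k, side k ^ t ≤ W → N₀ ≤ k := by
  have hb : 1 < (2 : ℝ) ^ t := Real.one_lt_rpow (by norm_num) ht
  obtain ⟨n, hn⟩ := pow_unbounded_of_one_lt W hb
  refine ⟨-n, fun k hk => ?_⟩
  by_contra! hlt
  have hpow : ((2 : ℝ) ^ t) ^ (n : ℤ) < ((2 : ℝ) ^ t) ^ (-k) :=
    zpow_lt_zpow_right₀ hb (by omega)
  rw [zpow_natCast, ← side_rpow] at hpow
  linarith

lemma exists_side_rpow_le {d t δ : ℝ} (hd : 0 ≤ d) (ht : 0 < t) (hδ : 0 < δ) :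
    ∃ k, d < 2 * side k ∧ side k ^ t ≤ d ^ t + δ := by
  -- `c ^ t = δ`; taking `max d c` keeps the scale positive when `d = 0`.
  set c := δ ^ t⁻¹
  have hc : 0 < c := Real.rpow_pos_of_pos hδ _
  obtain ⟨n, hn_le, hn_lt⟩ :=
    exists_mem_Ico_zpow (lt_max_of_lt_right hc : 0 < max d c) (by norm_num : (1 : ℝ) < 2)
  have hside : side (-n) = 2 ^ n := by simp [side]
  refine ⟨-n, ?_, ?_⟩
  · rw [hside, ← zpow_one_add₀ two_ne_zero, add_comm]
    exact (le_max_left d c).trans_lt hn_lt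
  · calc side (-n) ^ t ≤ max d c ^ t := Real.rpow_le_rpow (side_pos _).le (hside ▸ hn_le) ht.le
      _ ≤ d ^ t + δ := by
        rcases le_total d c with h | h
        · rw [max_eq_right h, ← Real.rpow_mul hδ.le, inv_mul_cancel₀ ht.ne', Real.rpow_one]
          linarith [Real.rpow_nonneg hd t]
        · rw [max_eq_left h]
          linarith

lemma exists_subset_Ioo_three {A : Set ℝ} (hA : IsBounded A) {s : ℝ} (hs : 0 < s)
    (hdiam : Metric.diam A < 2 * s) : ∃ n : ℤ, A ⊆ Ioo (s * n) (s * (n + 3)) := by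
  set a := sInf A
  have hceil_lt : s * ⌈a / s⌉ < a + s := by
    have := mul_lt_mul_of_pos_left (Int.ceil_lt_add_one (a / s)) hs
    rwa [mul_add, mul_div_cancel₀ _ hs.ne', mul_one] at this
  have hle_ceil : a ≤ s * ⌈a / s⌉ := by
    have := mul_le_mul_of_nonneg_left (Int.le_ceil (a / s)) hs.le
    rwa [mul_div_cancel₀ _ hs.ne'] at this
  refine ⟨⌈a / s⌉ - 1, fun x hx => ?_⟩
  obtain ⟨hax, hxb⟩ := hA.subset_Icc_sInf_sSup hx
  have hdiam_eq := Real.diam_eq hA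
  push_cast
  constructor <;> nlinarith

lemma Ioo_subset_biUnion_interval (k a b : ℤ) :
    Ioo (side k * a) (side k * b) ⊆ ⋃ n ∈ Finset.Ico a b, interval k n := by
  intro x ⟨hax, hxb⟩
  have hs := side_pos k
  refine mem_iUnion₂.2 ⟨⌊x / side k⌋, Finset.mem_Ico.2 ⟨?_, ?_⟩, ?_, ?_⟩
  · exact Int.le_floor.2 ((le_div_iff₀' hs).2 hax.le)
  · exact Int.floor_lt.2 ((div_lt_iff₀' hs).2 hxb)
  · exact (le_div_iff₀' hs).1 (Int.floor_le _)
  · exact ((div_le_iff₀' hs).1 (Int.lt_floor_add_one _).le)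

lemma exists_nine_squares {t : ℝ} (ht : 0 < t) {S : Set (ℝ × ℝ)} (hS : IsBounded S)
    {δ : ℝ≥0} (hδ : 0 < δ) :
    ∃ (U : Set (ℝ × ℝ)) (F : Finset Index), IsOpen U ∧ S ⊆ U ∧ U ⊆ ⋃ P ∈ F, square P ∧
      ∑ P ∈ F, ENNReal.ofReal (side P.1 ^ t) ≤ 9 * (Metric.ediam S ^ t + δ) := by
  obtain ⟨k, hk, hkt⟩ := exists_side_rpow_le (Metric.diam_nonneg (s := S)) ht (NNReal.coe_pos.2 hδ)
  have hproj : ∀ f : ℝ × ℝ → ℝ, LipschitzWith 1 f →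
      ∃ n : ℤ, f '' S ⊆ Ioo (side k * n) (side k * (n + 3)) := fun f hf =>
    exists_subset_Ioo_three (hf.isBounded_image hS) (side_pos k)
      ((show Metric.diam (f '' S) ≤ Metric.diam S by simpa using hf.diam_image_le S hS).trans_lt hk)
  obtain ⟨n₁, hn₁⟩ := hproj Prod.fst LipschitzWith.prod_fst
  obtain ⟨n₂, hn₂⟩ := hproj Prod.snd LipschitzWith.prod_snd
  refine ⟨Ioo (side k * n₁) (side k * (n₁ + 3)) ×ˢ Ioo (side k * n₂) (side k * (n₂ + 3)),
    {k} ×ˢ (Finset.Ico n₁ (n₁ + 3) ×ˢ Finset.Ico n₂ (n₂ + 3)), isOpen_Ioo.prod isOpen_Ioo,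
    fun x hx => ⟨hn₁ (mem_image_of_mem _ hx), hn₂ (mem_image_of_mem _ hx)⟩, ?_, ?_⟩
  · rintro ⟨x, y⟩ ⟨hx, hy⟩
    obtain ⟨a, ha, hxa⟩ := mem_iUnion₂.1 (Ioo_subset_biUnion_interval k n₁ (n₁ + 3) (by
      exact_mod_cast hx))
    obtain ⟨b, hb, hyb⟩ := mem_iUnion₂.1 (Ioo_subset_biUnion_interval k n₂ (n₂ + 3) (by
      exact_mod_cast hy))
    exact mem_iUnion₂.2 ⟨(k, a, b), Finset.mem_product.2 ⟨Finset.mem_singleton_self k,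
      Finset.mem_product.2 ⟨ha, hb⟩⟩, hxa, hyb⟩
  · have hdiam : ENNReal.ofReal (Metric.diam S ^ t) = Metric.ediam S ^ t := by
      rw [← ENNReal.ofReal_rpow_of_nonneg Metric.diam_nonneg ht.le, Metric.diam,
        ENNReal.ofReal_toReal hS.ediam_ne_top]
    have hside : ENNReal.ofReal (side k ^ t) ≤ Metric.ediam S ^ t + δ := by
      rw [← hdiam, ← ENNReal.ofReal_coe_nnreal,
        ← ENNReal.ofReal_add (Real.rpow_nonneg Metric.diam_nonneg t) δ.coe_nonneg]
      exact ENNReal.ofReal_le_ofReal hkt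
    have hcard : (Finset.Ico n₁ (n₁ + 3) ×ˢ Finset.Ico n₂ (n₂ + 3)).card = 9 := by
      simp [Finset.card_product]
    simp only [Finset.sum_product, Finset.sum_singleton, Finset.sum_const, nsmul_eq_mul, hcard]
    push_cast
    gcongr

lemma exists_dyadic_cover_of_cover {t : ℝ} (ht : 0 < t) {E : Set (ℝ × ℝ)} (hE : IsCompact E)
    {B : ℕ → Set (ℝ × ℝ)} (hcov : E ⊆ ⋃ i, B i) (hB : ∀ i, IsBounded (B i))
    {δ : ℕ → ℝ≥0} (hδ : ∀ i, 0 < δ i) :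
    ∃ 𝒮 : Finset Index, E ⊆ ⋃ S ∈ 𝒮, square S ∧
      ∑ S ∈ 𝒮, ENNReal.ofReal (side S.1 ^ t) ≤ 9 * ∑' i, (Metric.ediam (B i) ^ t + δ i) := by
  choose U F hU hBU hUF hF using fun i => exists_nine_squares ht (hB i) (hδ i)
  obtain ⟨I, hI⟩ := hE.elim_finite_subcover U hU (hcov.trans (iUnion_mono hBU))
  refine ⟨I.biUnion F, fun x hx => ?_, ?_⟩
  · obtain ⟨i, hi, hxU⟩ := mem_iUnion₂.1 (hI hx)
    obtain ⟨P, hP, hxP⟩ := mem_iUnion₂.1 (hUF i hxU)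
    exact mem_iUnion₂.2 ⟨P, Finset.mem_biUnion.2 ⟨i, hi, hP⟩, hxP⟩
  · calc ∑ S ∈ I.biUnion F, ENNReal.ofReal (side S.1 ^ t)
        ≤ ∑ i ∈ I, ∑ S ∈ F i, ENNReal.ofReal (side S.1 ^ t) := Finset.sum_biUnion_le I F _
      _ ≤ ∑ i ∈ I, 9 * (Metric.ediam (B i) ^ t + δ i) := Finset.sum_le_sum fun i _ => hF i
      _ ≤ 9 * ∑' i, (Metric.ediam (B i) ^ t + δ i) := by
        rw [← Finset.mul_sum]
        gcongr
        exact ENNReal.sum_le_tsum I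

lemma exists_dyadic_cover {t : ℝ} (ht : 0 < t) {E : Set (ℝ × ℝ)} (hE : IsCompact E)
    {η : ℝ≥0∞} (hη : η ≠ 0) :
    ∃ 𝒮 : Finset Index, E ⊆ ⋃ S ∈ 𝒮, square S ∧
      ∑ S ∈ 𝒮, ENNReal.ofReal (side S.1 ^ t) ≤ 9 * (hausdorffContent t E + η) := by
  have hη₂ : η / 2 ≠ 0 := (ENNReal.half_pos hη).ne'
  have hH := hausdorffContent_ne_top ht hE.isBounded
  obtain ⟨B, hcov, hB⟩ := exists_cover_tsum_lt_hausdorffContent_add hH hη₂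
  obtain ⟨δ, hδ, hδ_sum⟩ := ENNReal.exists_pos_sum_of_countable hη₂ ℕ
  have hB_fin : ∑' i, Metric.ediam (B i) ^ t ≠ ⊤ := (hB.trans_le le_top).ne
  have hB_bdd : ∀ i, IsBounded (B i) := fun i => Metric.isBounded_iff_ediam_ne_top.2 fun htop =>
    ENNReal.ne_top_of_tsum_ne_top hB_fin i (by rw [htop, ENNReal.top_rpow_of_pos ht])
  obtain ⟨𝒮, hcov𝒮, h𝒮⟩ := exists_dyadic_cover_of_cover ht hE hcov hB_bdd hδ
  refine ⟨𝒮, hcov𝒮, h𝒮.trans ?_⟩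
  rw [ENNReal.tsum_add, ← ENNReal.add_halves η, ← add_assoc]
  gcongr

theorem exists_packing_dyadic_cover {t : ℝ} (ht : 0 < t) {E : Set (ℝ × ℝ)} (hE : IsCompact E)
    {η : ℝ≥0∞} (hη : η ≠ 0) :
    ∃ 𝒯 : Finset Index,
      (∀ T ∈ 𝒯, (square T ∩ E).Nonempty) ∧
      (𝒯 : Set Index).PairwiseDisjoint (fun T => interior (square T)) ∧
      E ⊆ ⋃ T ∈ 𝒯, square T ∧
      (∀ Q, ∑ T ∈ 𝒯 with square T ⊆ square Q, side T.1 ^ t ≤ side Q.1 ^ t) ∧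
      ∑ T ∈ 𝒯, ENNReal.ofReal (side T.1 ^ t) ≤ 9 * (hausdorffContent t E + η) := by
  obtain ⟨𝒮₀, hcov₀, hmass₀⟩ := exists_dyadic_cover ht hE hη
  set 𝒮 := 𝒮₀.filter fun S => (square S ∩ E).Nonempty
  have hcov : E ⊆ ⋃ S ∈ 𝒮, square S := fun x hx => by
    obtain ⟨S, hS, hxS⟩ := mem_iUnion₂.1 (hcov₀ hx)
    exact mem_iUnion₂.2 ⟨S, Finset.mem_filter.2 ⟨hS, x, hxS, hx⟩, hxS⟩
  have hw : ∀ P : Index, 0 ≤ side P.1 ^ t := fun P => Real.rpow_nonneg (side_pos _).le t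
  obtain ⟨N₀, hN₀⟩ := exists_forall_le_of_side_rpow_le ht (∑ S ∈ 𝒮, side S.1 ^ t)
  obtain ⟨𝒯, h_above, h_below, hdisj, hpack, hmass⟩ := exists_isMaxHeavy_cover (𝒮 := 𝒮) hw
    fun Q hQ => hN₀ Q.1 (hQ.trans (Finset.sum_le_sum_of_subset_of_nonneg
      (Finset.filter_subset _ _) fun P _ _ => hw P))
  refine ⟨𝒯, fun T hT => ?_, hdisj, fun x hx => ?_, hpack, ?_⟩
  · obtain ⟨S, hS, hST⟩ := h_above T hT
    exact (Finset.mem_filter.1 hS).2.mono (inter_subset_inter_left E hST)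
  · obtain ⟨S, hS, hxS⟩ := mem_iUnion₂.1 (hcov hx)
    obtain ⟨T, hT, hST⟩ := h_below S hS
    exact mem_iUnion₂.2 ⟨T, hT, hST hxS⟩
  · calc ∑ T ∈ 𝒯, ENNReal.ofReal (side T.1 ^ t)
        = ENNReal.ofReal (∑ T ∈ 𝒯, side T.1 ^ t) :=
          (ENNReal.ofReal_sum_of_nonneg fun P _ => hw P).symm
      _ ≤ ENNReal.ofReal (∑ S ∈ 𝒮, side S.1 ^ t) := ENNReal.ofReal_le_ofReal hmass
      _ = ∑ S ∈ 𝒮, ENNReal.ofReal (side S.1 ^ t) := ENNReal.ofReal_sum_of_nonneg fun P _ => hw P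
      _ ≤ ∑ S ∈ 𝒮₀, ENNReal.ofReal (side S.1 ^ t) :=
          Finset.sum_le_sum_of_subset (Finset.filter_subset _ _)
      _ ≤ 9 * (hausdorffContent t E + η) := hmass₀

end DyadicGrid

open DyadicGrid

theorem packing_minimizer_general (E : Set (ℝ × ℝ)) (hE : IsCompact E)
    (t : ℝ) (ht0 : 0 < t) (ε : ℝ) (hε : 0 < ε) :
    ∃ (M : ℕ) (k : Fin M → ℤ) (m : Fin M → ℤ × ℤ),
      (∀ i, (dyadicSquare (k i) (m i) ∩ E).Nonempty) ∧
      (∀ i j, i ≠ j →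
        Disjoint (interior (dyadicSquare (k i) (m i))) (interior (dyadicSquare (k j) (m j)))) ∧
      E ⊆ ⋃ i, dyadicSquare (k i) (m i) ∧
      (∀ (k' : ℤ) (m' : ℤ × ℤ),
        (∑ i, if dyadicSquare (k i) (m i) ⊆ dyadicSquare k' m'
          then ((2 : ℝ) ^ (-(k i)) : ℝ) ^ t else 0) ≤ ((2 : ℝ) ^ (-k') : ℝ) ^ t) ∧
      (∑ i, ENNReal.ofReal (((2 : ℝ) ^ (-(k i)) : ℝ) ^ t))
        ≤ 9 * (hausdorffContent t E + ENNReal.ofReal ε) := by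
  obtain ⟨𝒯, h_meets, hdisj, hcov, hpack, hmass⟩ :=
    exists_packing_dyadic_cover ht0 hE (ENNReal.ofReal_pos.2 hε).ne'
  let e := 𝒯.equivFin.symm
  have hsum : ∀ {M : Type} [AddCommMonoid M] (f : Index → M), ∑ i, f (e i) = ∑ T ∈ 𝒯, f T :=
    fun f => (e.sum_comp fun T => f T).trans (𝒯.sum_coe_sort f)
  refine ⟨𝒯.card, fun i => (e i).1.1, fun i => (e i).1.2, fun i => h_meets _ (e i).2,
    fun i j hij => hdisj (e i).2 (e j).2 (fun h => hij (e.injective (Subtype.ext h))),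
    fun x hx => ?_, fun k m => ?_, (hsum fun T => ENNReal.ofReal (side T.1 ^ t)).trans_le hmass⟩
  · obtain ⟨T, hT, hxT⟩ := mem_iUnion₂.1 (hcov hx)
    refine mem_iUnion.2 ⟨e.symm ⟨T, hT⟩, ?_⟩
    change x ∈ square (e (e.symm ⟨T, hT⟩))
    rwa [e.apply_symm_apply]
  · refine (hsum fun T => if square T ⊆ square (k, m) then side T.1 ^ t else 0).trans_le ?_
    rw [← Finset.sum_filter]
    exact hpack (k, m)

/-- **Approximation of Hausdorff content by a minimizing dyadic covering.**
Given compact `E ⊆ (0,1)²`, `0 < t < 2` and `ε > 0`, there is a finite family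
of closed dyadic squares, each intersecting `E`, with pairwise disjoint
interiors, covering `E`, with `t`-Carleson packing norm at most `1`, and with
total `t`-mass at most `9 (ℋ^t_∞(E) + ε)`. -/
theorem packing_minimizer (E : Set (ℝ × ℝ)) (hE : IsCompact E)
    (hE' : E ⊆ Ioo (0:ℝ) 1 ×ˢ Ioo (0:ℝ) 1)
    (t : ℝ) (ht0 : 0 < t) (ht2 : t < 2) (ε : ℝ) (hε : 0 < ε) :
    ∃ (M : ℕ) (k : Fin M → ℤ) (m : Fin M → ℤ × ℤ),
      (∀ i, (dyadicSquare (k i) (m i) ∩ E).Nonempty) ∧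
      (∀ i j, i ≠ j →
        Disjoint (interior (dyadicSquare (k i) (m i))) (interior (dyadicSquare (k j) (m j)))) ∧
      E ⊆ ⋃ i, dyadicSquare (k i) (m i) ∧
      (∀ (k' : ℤ) (m' : ℤ × ℤ),
        (∑ i, if dyadicSquare (k i) (m i) ⊆ dyadicSquare k' m'
          then ((2 : ℝ) ^ (-(k i)) : ℝ) ^ t else 0) ≤ ((2 : ℝ) ^ (-k') : ℝ) ^ t) ∧
      (∑ i, ENNReal.ofReal (((2 : ℝ) ^ (-(k i)) : ℝ) ^ t))
        ≤ 9 * (hausdorffContent t E + ENNReal.ofReal ε) :=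
  packing_minimizer_general E hE t ht0 ε hε
end

section
/- Suppose that for constants C, c > 0 and exponents determined by a function F one has, for all measurable sets F₀ (in place of F) and G with F₀, G ⊆ P̄: whenever w(G) < 8 w(F₀), there exists F₁ ⊆ F₀ with w(F₁) ≥ w(F₀)/2 and ∫_G [T χ_{F₁}] w dx ≤ C min{w(F₀), w(G)}; and whenever w(G) ≥ 8 w(F₀), the estimate holds with F₁ = F₀. Then for all F, G ⊆ P̄, ∫_G [T χ_F] w dx ≤ C' log(2 + w(F)/w(G)) · min{w(F), w(G)}, and consequently ∫_G [T χ_F] w dx ≤ C(p) w(F)^{1/p} w(G)^{1−1/p} for every 1 < p < ∞. -/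
/-!
Write `F` as a major subset `F₁`, where the estimate holds, and a remainder `F \ F₁` carrying
at most half of the mass of `F`; subadditivity of `T` lets one iterate on the remainder. Each
step halves `w(F) / w(G)`, and once `8 w(F) ≤ w(G)` the easy estimate applies, so about
`log₂ (8 w(F) / w(G))` steps suffice, each costing `C min{w(F), w(G)}`. The logarithm is then
absorbed by the power through `log (2 + r) · min{r, 1} ≤ (p + 3) r^{1/p}`.
-/

open MeasureTheory Set ENNReal

theorem exists_le_two_pow_succ_mul_log_two_le {r : ℝ} (hr : 0 ≤ r) :
    ∃ n : ℕ, 8 * r ≤ 2 ^ n ∧ (n + 1) * Real.log 2 ≤ 6 * Real.log (2 + r) := by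
  obtain ⟨m, hm, hm'⟩ := exists_nat_pow_near (x := 2 + r) (by linarith) one_lt_two
  refine ⟨m + 4, by rw [pow_succ] at hm'; rw [pow_add]; linarith, ?_⟩
  have hlog_pow : m * Real.log 2 ≤ Real.log (2 + r) := by
    rw [← Real.log_pow]; exact Real.log_le_log (by positivity) hm
  have hlog_two : Real.log 2 ≤ Real.log (2 + r) := Real.log_le_log two_pos (by linarith)
  push_cast
  linarith

section

variable {X : Type*} [MeasurableSpace X]

theorem two_mul_measure_diff_le {μ : Measure X} {F F₁ : Set X} (hF₁ : MeasurableSet F₁)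
    (hF₁F : F₁ ⊆ F) (hF : μ F ≠ ∞) (hhalf : μ F / 2 ≤ μ F₁) : 2 * μ (F \ F₁) ≤ μ F := by
  rw [measure_sdiff hF₁F hF₁.nullMeasurableSet (ne_top_of_le_ne_top hF (measure_mono hF₁F))]
  calc 2 * (μ F - μ F₁) ≤ 2 * (μ F - μ F / 2) := by gcongr
    _ = μ F := by rw [ENNReal.sub_half hF, ENNReal.mul_div_cancel two_ne_zero ofNat_ne_top]

theorem setLIntegral_union_le {μ : Measure X} {T : Set X → X → ℝ≥0∞} {F F' G : Set X}
    (hT : Measurable (T F)) (hsub : ∀ x, T (F ∪ F') x ≤ T F x + T F' x) :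
    ∫⁻ x in G, T (F ∪ F') x ∂μ ≤ (∫⁻ x in G, T F x ∂μ) + ∫⁻ x in G, T F' x ∂μ :=
  (lintegral_mono hsub).trans_eq (lintegral_add_left hT _)

theorem le_mul_min_of_major_subset {μ : Measure X} {S : Set X} (hS : μ S ≠ ∞)
    {φ : Set X → ℝ≥0∞} {K a b : ℝ≥0∞}
    (hφ : ∀ F F', MeasurableSet F → MeasurableSet F' → φ (F ∪ F') ≤ φ F + φ F')
    (hmajor : ∀ F, MeasurableSet F → F ⊆ S → b < K * μ F →
      ∃ F₁, MeasurableSet F₁ ∧ F₁ ⊆ F ∧ μ F / 2 ≤ μ F₁ ∧ φ F₁ ≤ a * min (μ F) b)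
    (heasy : ∀ F, MeasurableSet F → F ⊆ S → K * μ F ≤ b → φ F ≤ a * min (μ F) b)
    (n : ℕ) {F : Set X} (hF : MeasurableSet F) (hFS : F ⊆ S) (hKF : K * μ F ≤ 2 ^ n * b) :
    φ F ≤ (n + 1) * a * min (μ F) b := by
  induction n generalizing F with
  | zero => simpa using heasy F hF hFS (by simpa using hKF)
  | succ n ih =>
    rcases le_or_gt (K * μ F) b with hsmall | hlarge
    · refine (heasy F hF hFS hsmall).trans ?_
      rw [mul_assoc]
      exact le_mul_of_one_le_left' le_add_self
    obtain ⟨F₁, hF₁, hF₁F, hhalf, hφF₁⟩ := hmajor F hF hFS hlarge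
    have hrest : K * μ (F \ F₁) ≤ 2 ^ n * b := by
      have hμF : μ F ≠ ∞ := ne_top_of_le_ne_top hS (measure_mono hFS)
      refine (ENNReal.mul_le_mul_iff_right two_ne_zero ofNat_ne_top).mp ?_
      calc 2 * (K * μ (F \ F₁)) = K * (2 * μ (F \ F₁)) := by ring
        _ ≤ K * μ F := by gcongr; exact two_mul_measure_diff_le hF₁ hF₁F hμF hhalf
        _ ≤ 2 ^ (n + 1) * b := hKF
        _ = 2 * (2 ^ n * b) := by ring
    calc φ F = φ (F₁ ∪ F \ F₁) := by rw [union_sdiff_cancel hF₁F]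
      _ ≤ φ F₁ + φ (F \ F₁) := hφ _ _ hF₁ (hF.diff hF₁)
      _ ≤ a * min (μ F) b + (n + 1) * a * min (μ (F \ F₁)) b :=
        add_le_add hφF₁ (ih (hF.diff hF₁) (sdiff_subset.trans hFS) hrest)
      _ ≤ a * min (μ F) b + (n + 1) * a * min (μ F) b := by gcongr; exact sdiff_subset
      _ = (↑(n + 1) + 1) * a * min (μ F) b := by push_cast; ring

theorem setLIntegral_le_log_mul_min {w : Measure X} {Pbar : Set X} (hfin : w Pbar < ∞)
    {T : Set X → X → ℝ≥0∞} (hmeas : ∀ F : Set X, MeasurableSet F → Measurable (T F))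
    (hsub : ∀ F F' : Set X, ∀ x, T (F ∪ F') x ≤ T F x + T F' x) {C : ℝ} (hC : 0 < C)
    (hmajor : ∀ F₀ G : Set X, MeasurableSet F₀ → MeasurableSet G →
      F₀ ⊆ Pbar → G ⊆ Pbar → w G < 8 * w F₀ →
      ∃ F₁ : Set X, MeasurableSet F₁ ∧ F₁ ⊆ F₀ ∧ w F₀ / 2 ≤ w F₁ ∧
        (∫⁻ x in G, T F₁ x ∂w) ≤ ENNReal.ofReal C * min (w F₀) (w G))
    (heasy : ∀ F₀ G : Set X, MeasurableSet F₀ → MeasurableSet G →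
      F₀ ⊆ Pbar → G ⊆ Pbar → 8 * w F₀ ≤ w G →
      (∫⁻ x in G, T F₀ x ∂w) ≤ ENNReal.ofReal C * min (w F₀) (w G))
    (F G : Set X) (hF : MeasurableSet F) (hG : MeasurableSet G) (hFP : F ⊆ Pbar) (hGP : G ⊆ Pbar) :
    ∫⁻ x in G, T F x ∂w
      ≤ ENNReal.ofReal (6 * C / Real.log 2 * Real.log (2 + (w F).toReal / (w G).toReal)) *
          min (w F) (w G) := by
  rcases eq_or_ne (w G) 0 with hG0 | hG0
  · simp [Measure.restrict_eq_zero.mpr hG0]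
  have hwF : w F ≠ ∞ := ((measure_mono hFP).trans_lt hfin).ne
  have hwG : w G ≠ ∞ := ((measure_mono hGP).trans_lt hfin).ne
  have hg : 0 < (w G).toReal := toReal_pos hG0 hwG
  obtain ⟨n, hn, hn_log⟩ := exists_le_two_pow_succ_mul_log_two_le
    (div_nonneg (toReal_nonneg (a := w F)) hg.le)
  have hKF : 8 * w F ≤ 2 ^ n * w G := by
    rw [mul_div_assoc', div_le_iff₀ hg] at hn
    have := ENNReal.ofReal_le_ofReal hn
    rwa [ENNReal.ofReal_mul (by norm_num), ENNReal.ofReal_mul (by positivity), ofReal_toReal hwF,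
      ofReal_toReal hwG, ENNReal.ofReal_pow zero_le_two, ENNReal.ofReal_ofNat,
      ENNReal.ofReal_ofNat] at this
  refine (le_mul_min_of_major_subset hfin.ne
    (fun F F' hF _ ↦ setLIntegral_union_le (hmeas F hF) (hsub F F'))
    (fun F hF hFP ↦ hmajor F G hF hG hFP hGP) (fun F hF hFP ↦ heasy F G hF hG hFP hGP)
    n hF hFP hKF).trans ?_
  rw [← ENNReal.ofReal_natCast, ← ENNReal.ofReal_one,
    ← ENNReal.ofReal_add (by positivity) zero_le_one, ← ENNReal.ofReal_mul (by positivity)]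
  refine mul_le_mul_left (ENNReal.ofReal_le_ofReal ?_) _
  rw [div_mul_eq_mul_div, le_div_iff₀ (Real.log_pos one_lt_two)]
  nlinarith

end

theorem log_two_add_mul_min_one_le {p r : ℝ} (hp : 1 < p) (hr : 0 ≤ r) :
    Real.log (2 + r) * min r 1 ≤ (p + 3) * r ^ (1 / p) := by
  have hlog_three : Real.log 3 ≤ 2 := by
    linarith [Real.log_le_sub_one_of_pos (x := 3) three_pos]
  have hp_inv : 1 / p ≤ 1 := by rw [div_le_one (by linarith)]; exact hp.le
  rcases le_total r 1 with hr1 | hr1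
  · have hlog : Real.log (2 + r) ≤ 2 :=
      (Real.log_le_log (by linarith) (by linarith)).trans hlog_three
    calc Real.log (2 + r) * min r 1 = Real.log (2 + r) * r := by rw [min_eq_left hr1]
      _ ≤ 2 * r ^ (1 / p) := by
        gcongr
        exact Real.self_le_rpow_of_le_one hr hr1 hp_inv
      _ ≤ (p + 3) * r ^ (1 / p) := by gcongr; linarith
  · have hr0 : 0 < r := by linarith
    have hroot : 1 ≤ r ^ (1 / p) := Real.one_le_rpow hr1 (by positivity)
    have hlog_r : Real.log r = p * Real.log (r ^ (1 / p)) := by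
      rw [Real.log_rpow hr0]; field_simp
    have hlog_root : Real.log (r ^ (1 / p)) ≤ r ^ (1 / p) - 1 :=
      Real.log_le_sub_one_of_pos (by positivity)
    have hlog : Real.log (2 + r) ≤ Real.log 3 + Real.log r := by
      rw [← Real.log_mul three_pos.ne' hr0.ne']
      exact Real.log_le_log (by linarith) (by linarith)
    rw [min_eq_right hr1, mul_one]
    nlinarith

theorem log_two_add_div_mul_min_le {p f g : ℝ} (hp : 1 < p) (hf : 0 ≤ f) (hg : 0 ≤ g) :
    Real.log (2 + f / g) * min f g ≤ (p + 3) * f ^ (1 / p) * g ^ (1 - 1 / p) := by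
  rcases hg.eq_or_lt with rfl | hg
  · rw [min_eq_right hf, mul_zero]; positivity
  have hmin : min f g = min (f / g) 1 * g := by
    rw [min_mul_of_nonneg _ _ hg.le, div_mul_cancel₀ _ hg.ne', one_mul]
  have hroot : f ^ (1 / p) * g ^ (1 - 1 / p) = (f / g) ^ (1 / p) * g := by
    rw [Real.div_rpow hf hg.le, Real.rpow_sub hg, Real.rpow_one]
    field_simp
  rw [mul_assoc (p + 3), hroot, ← mul_assoc, hmin, ← mul_assoc]
  exact mul_le_mul_of_nonneg_right (log_two_add_mul_min_one_le hp (div_nonneg hf hg.le)) hg.le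

theorem ENNReal.ofReal_log_mul_min_le {p c : ℝ} (hp : 1 < p) (hc : 0 ≤ c) {x y : ℝ≥0∞}
    (hx : x ≠ ∞) (hy : y ≠ ∞) :
    ENNReal.ofReal (c * Real.log (2 + x.toReal / y.toReal)) * min x y
      ≤ ENNReal.ofReal (c * (p + 3)) * x ^ (1 / p) * y ^ (1 - 1 / p) := by
  obtain ⟨f, hf, rfl⟩ : ∃ f, 0 ≤ f ∧ ENNReal.ofReal f = x := ⟨_, toReal_nonneg, ofReal_toReal hx⟩
  obtain ⟨g, hg, rfl⟩ : ∃ g, 0 ≤ g ∧ ENNReal.ofReal g = y := ⟨_, toReal_nonneg, ofReal_toReal hy⟩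
  have hp_pos : 0 < 1 / p := by positivity
  have hp_inv : 0 ≤ 1 - 1 / p := by rw [sub_nonneg, div_le_one (by linarith)]; exact hp.le
  have hlog : 0 ≤ Real.log (2 + f / g) := Real.log_nonneg (by linarith [div_nonneg hf hg])
  rw [toReal_ofReal hf, toReal_ofReal hg, ← ENNReal.ofReal_min,
    ofReal_rpow_of_nonneg hf hp_pos.le, ofReal_rpow_of_nonneg hg hp_inv,
    ← ENNReal.ofReal_mul (mul_nonneg hc hlog), ← ENNReal.ofReal_mul (by positivity),
    ← ENNReal.ofReal_mul (by positivity)]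
  refine ENNReal.ofReal_le_ofReal ?_
  simp only [mul_assoc c]
  exact mul_le_mul_of_nonneg_left (log_two_add_div_mul_min_le hp hf hg) hc

theorem major_subset_iteration_general {X : Type*} [MeasurableSpace X]
    (w : Measure X) (Pbar : Set X) (hfin : w Pbar < ∞)
    (T : Set X → X → ℝ≥0∞)
    (hmeas : ∀ F : Set X, MeasurableSet F → Measurable (T F))
    (hsub : ∀ F F' : Set X, ∀ x, T (F ∪ F') x ≤ T F x + T F' x)
    (C : ℝ) (hC : 0 < C)
    (hmajor : ∀ F₀ G : Set X, MeasurableSet F₀ → MeasurableSet G →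
      F₀ ⊆ Pbar → G ⊆ Pbar → w G < 8 * w F₀ →
      ∃ F₁ : Set X, MeasurableSet F₁ ∧ F₁ ⊆ F₀ ∧ w F₀ / 2 ≤ w F₁ ∧
        (∫⁻ x in G, T F₁ x ∂w) ≤ ENNReal.ofReal C * min (w F₀) (w G))
    (heasy : ∀ F₀ G : Set X, MeasurableSet F₀ → MeasurableSet G →
      F₀ ⊆ Pbar → G ⊆ Pbar → 8 * w F₀ ≤ w G →
      (∫⁻ x in G, T F₀ x ∂w) ≤ ENNReal.ofReal C * min (w F₀) (w G)) :
    (∃ C' : ℝ, 0 < C' ∧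
      ∀ F G : Set X, MeasurableSet F → MeasurableSet G → F ⊆ Pbar → G ⊆ Pbar →
        (∫⁻ x in G, T F x ∂w)
          ≤ ENNReal.ofReal (C' * Real.log (2 + (w F).toReal / (w G).toReal)) *
              min (w F) (w G)) ∧
    (∀ p : ℝ, 1 < p → ∃ Cp : ℝ, 0 < Cp ∧
      ∀ F G : Set X, MeasurableSet F → MeasurableSet G → F ⊆ Pbar → G ⊆ Pbar →
        (∫⁻ x in G, T F x ∂w)
          ≤ ENNReal.ofReal Cp * w F ^ (1/p) * w G ^ (1 - 1/p)) := by
  have hlog := setLIntegral_le_log_mul_min hfin hmeas hsub hC hmajor heasy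
  refine ⟨⟨6 * C / Real.log 2, by positivity, hlog⟩, fun p hp ↦
    ⟨6 * C / Real.log 2 * (p + 3), by positivity, fun F G hF hG hFP hGP ↦ ?_⟩⟩
  exact (hlog F G hF hG hFP hGP).trans (ENNReal.ofReal_log_mul_min_le hp (by positivity)
    ((measure_mono hFP).trans_lt hfin).ne ((measure_mono hGP).trans_lt hfin).ne)

/-- **Major-subset iteration scheme.** Let `T` be a positive operator on
indicators (monotone and subadditive in the set argument) and `w` a measure,
finite on `P̄`. Suppose for all measurable `F₀, G ⊆ P̄`: if `w(G) < 8 w(F₀)`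
there is a major subset `F₁ ⊆ F₀` with `w(F₁) ≥ w(F₀)/2` and
`∫_G T χ_{F₁} dw ≤ C min{w(F₀), w(G)}`; and if `w(G) ≥ 8 w(F₀)` the same
estimate holds with `F₁ = F₀`. Then for all `F, G ⊆ P̄`,
`∫_G T χ_F dw ≤ C' log(2 + w(F)/w(G)) min{w(F), w(G)}`, and consequently
`∫_G T χ_F dw ≤ C(p) w(F)^{1/p} w(G)^{1−1/p}` for every `1 < p < ∞`. -/
theorem major_subset_iteration {X : Type*} [MeasurableSpace X]
    (w : Measure X) (Pbar : Set X) (hPbar : MeasurableSet Pbar) (hfin : w Pbar < ∞)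
    (T : Set X → X → ℝ≥0∞)
    (hmeas : ∀ F : Set X, MeasurableSet F → Measurable (T F))
    (hmono : ∀ F F' : Set X, F ⊆ F' → ∀ x, T F x ≤ T F' x)
    (hsub : ∀ F F' : Set X, ∀ x, T (F ∪ F') x ≤ T F x + T F' x)
    (C : ℝ) (hC : 0 < C)
    (hmajor : ∀ F₀ G : Set X, MeasurableSet F₀ → MeasurableSet G →
      F₀ ⊆ Pbar → G ⊆ Pbar → w G < 8 * w F₀ →
      ∃ F₁ : Set X, MeasurableSet F₁ ∧ F₁ ⊆ F₀ ∧ w F₀ / 2 ≤ w F₁ ∧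
        (∫⁻ x in G, T F₁ x ∂w) ≤ ENNReal.ofReal C * min (w F₀) (w G))
    (heasy : ∀ F₀ G : Set X, MeasurableSet F₀ → MeasurableSet G →
      F₀ ⊆ Pbar → G ⊆ Pbar → 8 * w F₀ ≤ w G →
      (∫⁻ x in G, T F₀ x ∂w) ≤ ENNReal.ofReal C * min (w F₀) (w G)) :
    (∃ C' : ℝ, 0 < C' ∧
      ∀ F G : Set X, MeasurableSet F → MeasurableSet G → F ⊆ Pbar → G ⊆ Pbar →
        (∫⁻ x in G, T F x ∂w)
          ≤ ENNReal.ofReal (C' * Real.log (2 + (w F).toReal / (w G).toReal)) *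
              min (w F) (w G)) ∧
    (∀ p : ℝ, 1 < p → ∃ Cp : ℝ, 0 < Cp ∧
      ∀ F G : Set X, MeasurableSet F → MeasurableSet G → F ⊆ Pbar → G ⊆ Pbar →
        (∫⁻ x in G, T F x ∂w)
          ≤ ENNReal.ofReal Cp * w F ^ (1/p) * w G ^ (1 - 1/p)) :=
  major_subset_iteration_general w Pbar hfin T hmeas hsub C hC hmajor heasy
end
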